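/- arXiv:2505.10058 — 3 statements merged into one kernel-verified Lean document; each statement's English description precedes it below -/
import Mathlib

section
/- Let d ≥ 1, σ ≥ 0, λ₀ > 0 and δ ∈ (0,1). There exist constants θ₂ > 0 and C₀ > 0, depending only on λ₀, δ and σ, such that for all k, ℓ ∈ ℤ^d and all 0 ≤ s ≤ t: C_{k,ℓ}(t,s) ≤ C₀ (t−s) e^{−2θ₂ |k|(t−s)/⟨t⟩^{δ}} · min{⟨kt−ℓs⟩, ⟨ℓs⟩}^{−σ}. -/
open MeasureTheory
open scoped ENNReal

noncomputable section

/-- `ℝ^d` with the Euclidean norm. -/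
abbrev Ed (d : ℕ) := EuclideanSpace ℝ (Fin d)

/-- Embedding of `ℤ^d` into `ℝ^d`. -/
def toE {d : ℕ} (k : Fin d → ℤ) : Ed d := WithLp.toLp 2 (fun i => (k i : ℝ))

/-- Japanese bracket of a scalar: `⟨u⟩ = (1+u²)^{1/2}`. -/
def jap (u : ℝ) : ℝ := Real.sqrt (1 + u ^ 2)

/-- Japanese bracket of a vector: `⟨η⟩ = (1+|η|²)^{1/2}`. -/
def japV {d : ℕ} (η : Ed d) : ℝ := Real.sqrt (1 + ‖η‖ ^ 2)

/-- Joint bracket `⟨k,η⟩ = (1+|k|²+|η|²)^{1/2}`. -/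
def japKV {d : ℕ} (k : Fin d → ℤ) (η : Ed d) : ℝ := Real.sqrt (1 + ‖toE k‖ ^ 2 + ‖η‖ ^ 2)

/-- The analytic weight `A_{k,η}(z) = e^{z⟨k,η⟩} ⟨η⟩^σ`. -/
def wA (d : ℕ) (σ z : ℝ) (k : Fin d → ℤ) (η : Ed d) : ℝ :=
  Real.exp (z * japKV k η) * japV η ^ σ

/-- The time-dependent analyticity radius `λ(t) = λ₀(1+(1+t)^{-δ})`. -/
def lam (lam0 δ t : ℝ) : ℝ := lam0 * (1 + (1 + t) ^ (-δ))

/-- The echo kernel `C_{k,ℓ}(t,s) = (t-s) A_{k,kt}(λ(t)) / (A_{ℓ,ℓs}(λ(s)) A_{k-ℓ,kt-ℓs}(λ(s)))`. -/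
def Ckl (d : ℕ) (σ lam0 δ : ℝ) (k ℓ : Fin d → ℤ) (t s : ℝ) : ℝ :=
  (t - s) * wA d σ (lam lam0 δ t) k (t • toE k) /
    (wA d σ (lam lam0 δ s) ℓ (s • toE ℓ) * wA d σ (lam lam0 δ s) (k - ℓ) (t • toE k - s • toE ℓ))

/-! The bracket `⟨k,η⟩` is subadditive (Minkowski's inequality with `1` as an extra coordinate),
so at the common radius `λ(s)` the weight of `(k, kt)` is at most the product of the weights of
`(ℓ, ℓs)` and `(k-ℓ, kt-ℓs)`, up to `2^σ min{⟨kt-ℓs⟩,⟨ℓs⟩}^{-σ}` from `⟨η⟩ ≤ ⟨η-ξ⟩ + ⟨ξ⟩`.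
Passing from radius `λ(s)` to `λ(t)` leaves the factor `e^{-(λ(s)-λ(t))⟨k,kt⟩}`, and
`λ(s)-λ(t) ≥ λ₀δ(t-s)(1+t)^{-1-δ}` together with `⟨k,kt⟩ ≥ |k|⟨t⟩ ≥ |k|(1+t)/2` bounds it by
`e^{-λ₀δ|k|(t-s)/(4⟨t⟩^δ)}`: so `θ₂ = λ₀δ/8` and `C₀ = 2^σ`. -/

open Real

/-- Minkowski's inequality for `(1, x₁, y₁) + (0, x₂, y₂)`. -/
theorem sqrt_one_add_sq_add_sq_le {x y x₁ y₁ x₂ y₂ : ℝ} (hx : 0 ≤ x) (hy : 0 ≤ y)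
    (hx₁₂ : x ≤ x₁ + x₂) (hy₁₂ : y ≤ y₁ + y₂) :
    √(1 + x ^ 2 + y ^ 2) ≤ √(1 + x₁ ^ 2 + y₁ ^ 2) + √(1 + x₂ ^ 2 + y₂ ^ 2) := by
  have hA := sq_sqrt (show 0 ≤ 1 + x₁ ^ 2 + y₁ ^ 2 by positivity)
  have hB := sq_sqrt (show 0 ≤ 1 + x₂ ^ 2 + y₂ ^ 2 by positivity)
  have hCS : x₁ * x₂ + y₁ * y₂ ≤ √(1 + x₁ ^ 2 + y₁ ^ 2) * √(1 + x₂ ^ 2 + y₂ ^ 2) := by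
    have hsq : (x₁ * x₂ + y₁ * y₂) ^ 2 ≤ (1 + x₁ ^ 2 + y₁ ^ 2) * (1 + x₂ ^ 2 + y₂ ^ 2) := by
      nlinarith [sq_nonneg (x₁ * y₂ - y₁ * x₂), sq_nonneg (x₁ - x₂), sq_nonneg (y₁ - y₂)]
    rw [← sqrt_mul (by positivity)]
    exact le_sqrt_of_sq_le hsq
  rw [sqrt_le_left (by positivity)]
  nlinarith [mul_le_mul hx₁₂ hx₁₂ hx (hx.trans hx₁₂), mul_le_mul hy₁₂ hy₁₂ hy (hy.trans hy₁₂)]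

/-- The tangent line inequality at `b` for the convex function `x ↦ x ^ (-δ)`. -/
theorem mul_sub_mul_rpow_le_rpow_neg_sub_rpow_neg {a b δ : ℝ} (ha : 0 < a) (hab : a ≤ b)
    (hδ : 0 ≤ δ) : δ * (b - a) * b ^ (-(1 + δ)) ≤ a ^ (-δ) - b ^ (-δ) := by
  have hb : 0 < b := ha.trans_le hab
  have hba : 0 < b / a := div_pos hb ha
  have hbernoulli : 1 + δ * (1 - a / b) ≤ (b / a) ^ δ :=
    calc 1 + δ * (1 - a / b) = 1 + δ * (1 - (b / a)⁻¹) := by rw [inv_div]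
      _ ≤ 1 + δ * log (b / a) := by gcongr; exact one_sub_inv_le_log_of_pos hba
      _ ≤ exp (log (b / a) * δ) := by linarith [add_one_le_exp (log (b / a) * δ)]
      _ = (b / a) ^ δ := (rpow_def_of_pos hba δ).symm
  have hleft : δ * (b - a) * b ^ (-(1 + δ)) = δ * (1 - a / b) * b ^ (-δ) := by
    rw [neg_add, rpow_add hb, rpow_neg_one]
    field_simp
  have hright : a ^ (-δ) = (b / a) ^ δ * b ^ (-δ) := by
    rw [div_rpow hb.le ha.le, rpow_neg ha.le, rpow_neg hb.le]
    field_simp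
  rw [hleft, hright]
  nlinarith [rpow_pos_of_pos hb (-δ)]

theorem rpow_le_two_rpow_mul_min_rpow_neg_mul {p q r σ : ℝ} (hp : 0 < p) (hq : 0 < q)
    (hr : 0 ≤ r) (hrpq : r ≤ p + q) (hσ : 0 ≤ σ) :
    r ^ σ ≤ 2 ^ σ * min p q ^ (-σ) * (p ^ σ * q ^ σ) := by
  have hmin : 0 < min p q := lt_min hp hq
  have hmax : max p q = p * q / min p q := by
    rw [eq_div_iff hmin.ne', mul_comm]
    exact min_mul_max p q
  calc r ^ σ ≤ (2 * max p q) ^ σ :=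
        rpow_le_rpow hr (by linarith [le_max_left p q, le_max_right p q]) hσ
    _ = 2 ^ σ * min p q ^ (-σ) * (p ^ σ * q ^ σ) := by
        rw [mul_rpow zero_le_two (hp.le.trans (le_max_left p q)), hmax,
          div_rpow (by positivity) hmin.le, mul_rpow hp.le hq.le, rpow_neg hmin.le]
        ring

theorem one_le_jap (u : ℝ) : 1 ≤ jap u :=
  le_sqrt_of_sq_le (by nlinarith [sq_nonneg u])

theorem one_add_le_two_mul_jap (t : ℝ) : 1 + t ≤ 2 * jap t := by
  have := le_sqrt_of_sq_le (show ((1 + t) / 2) ^ 2 ≤ 1 + t ^ 2 by nlinarith)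
  unfold jap
  linarith

theorem one_le_japV {d : ℕ} (η : Ed d) : 1 ≤ japV η :=
  le_sqrt_of_sq_le (by nlinarith [sq_nonneg ‖η‖])

theorem japV_add_le {d : ℕ} (η ξ : Ed d) : japV (η + ξ) ≤ japV η + japV ξ := by
  simpa [japV] using sqrt_one_add_sq_add_sq_le (norm_nonneg (η + ξ)) le_rfl
    (norm_add_le η ξ) (add_zero (0 : ℝ)).ge

theorem toE_add {d : ℕ} (k₁ k₂ : Fin d → ℤ) : toE (k₁ + k₂) = toE k₁ + toE k₂ := by
  ext i
  simp [toE]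

theorem japKV_add_le {d : ℕ} (k₁ k₂ : Fin d → ℤ) (η₁ η₂ : Ed d) :
    japKV (k₁ + k₂) (η₁ + η₂) ≤ japKV k₁ η₁ + japKV k₂ η₂ := by
  unfold japKV
  rw [toE_add]
  exact sqrt_one_add_sq_add_sq_le (norm_nonneg _) (norm_nonneg _) (norm_add_le _ _)
    (norm_add_le _ _)

theorem norm_mul_jap_le_japKV {d : ℕ} (k : Fin d → ℤ) (t : ℝ) :
    ‖toE k‖ * jap t ≤ japKV k (t • toE k) := by
  unfold japKV jap
  rw [norm_smul, norm_eq_abs, mul_pow, sq_abs, ← sqrt_sq (norm_nonneg (toE k)),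
    ← sqrt_mul (sq_nonneg _), sqrt_sq (norm_nonneg _)]
  exact sqrt_le_sqrt (by nlinarith [sq_nonneg ‖toE k‖])

theorem wA_pos (d : ℕ) (σ z : ℝ) (k : Fin d → ℤ) (η : Ed d) : 0 < wA d σ z k η :=
  mul_pos (exp_pos _) (rpow_pos_of_pos (zero_lt_one.trans_le (one_le_japV η)) σ)

theorem wA_eq_exp_mul_wA (d : ℕ) (σ z z' : ℝ) (k : Fin d → ℤ) (η : Ed d) :
    wA d σ z k η = exp (-((z' - z) * japKV k η)) * wA d σ z' k η := by
  rw [wA, wA, ← mul_assoc, ← exp_add]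
  ring_nf

theorem wA_le_mul_wA_mul_wA {d : ℕ} {σ z : ℝ} (hσ : 0 ≤ σ) (hz : 0 ≤ z) (k ℓ : Fin d → ℤ)
    (η ξ : Ed d) :
    wA d σ z k η ≤
      2 ^ σ * min (japV (η - ξ)) (japV ξ) ^ (-σ) * (wA d σ z ℓ ξ * wA d σ z (k - ℓ) (η - ξ)) := by
  have hK : japKV k η ≤ japKV ℓ ξ + japKV (k - ℓ) (η - ξ) := by
    simpa using japKV_add_le ℓ (k - ℓ) ξ (η - ξ)
  have hR : japV η ≤ japV (η - ξ) + japV ξ := by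
    simpa using japV_add_le (η - ξ) ξ
  have hexp : exp (z * japKV k η) ≤ exp (z * japKV ℓ ξ) * exp (z * japKV (k - ℓ) (η - ξ)) := by
    rw [← exp_add, ← mul_add]
    gcongr
  have hpow := rpow_le_two_rpow_mul_min_rpow_neg_mul
    (zero_lt_one.trans_le (one_le_japV (η - ξ))) (zero_lt_one.trans_le (one_le_japV ξ))
    (zero_le_one.trans (one_le_japV η)) hR hσ
  unfold wA
  calc exp (z * japKV k η) * japV η ^ σ
      ≤ exp (z * japKV ℓ ξ) * exp (z * japKV (k - ℓ) (η - ξ)) *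
          (2 ^ σ * min (japV (η - ξ)) (japV ξ) ^ (-σ) * (japV (η - ξ) ^ σ * japV ξ ^ σ)) :=
        mul_le_mul hexp hpow (rpow_nonneg (zero_le_one.trans (one_le_japV η)) σ) (by positivity)
    _ = _ := by ring

theorem lam_sub_lam_ge {lam0 δ s t : ℝ} (hl : 0 ≤ lam0) (hδ : 0 ≤ δ) (hs : 0 ≤ s)
    (hst : s ≤ t) : lam0 * δ * (t - s) * (1 + t) ^ (-(1 + δ)) ≤ lam lam0 δ s - lam lam0 δ t :=
  calc lam0 * δ * (t - s) * (1 + t) ^ (-(1 + δ))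
      = lam0 * (δ * ((1 + t) - (1 + s)) * (1 + t) ^ (-(1 + δ))) := by ring
    _ ≤ lam0 * ((1 + s) ^ (-δ) - (1 + t) ^ (-δ)) := by
        gcongr
        exact mul_sub_mul_rpow_le_rpow_neg_sub_rpow_neg (by linarith) (by linarith) hδ
    _ = lam lam0 δ s - lam lam0 δ t := by unfold lam; ring

theorem one_div_four_mul_jap_rpow_le {δ t : ℝ} (hδ0 : 0 ≤ δ) (hδ1 : δ ≤ 1) (ht : 0 ≤ t) :
    1 / (4 * jap t ^ δ) ≤ (1 + t) ^ (-(1 + δ)) * jap t := by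
  have hJ : 0 < jap t := zero_lt_one.trans_le (one_le_jap t)
  have hpow : (1 + t) ^ (1 + δ) ≤ 4 * (jap t * jap t ^ δ) :=
    calc (1 + t) ^ (1 + δ) ≤ (2 * jap t) ^ (1 + δ) :=
          rpow_le_rpow (by linarith) (one_add_le_two_mul_jap t) (by linarith)
      _ = 2 ^ (1 + δ) * (jap t * jap t ^ δ) := by
          rw [mul_rpow zero_le_two hJ.le, rpow_add hJ, rpow_one]
      _ ≤ 2 ^ (2 : ℝ) * (jap t * jap t ^ δ) := by
          gcongr
          · exact one_le_two
          · linarith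
      _ = 4 * (jap t * jap t ^ δ) := by norm_num
  rw [rpow_neg (by linarith), ← div_eq_inv_mul, div_le_div_iff₀ (by positivity)
    (by positivity)]
  linarith

theorem lam_sub_lam_mul_japKV_ge {d : ℕ} {lam0 δ s t : ℝ} (hl : 0 ≤ lam0) (hδ0 : 0 ≤ δ)
    (hδ1 : δ ≤ 1) (k : Fin d → ℤ) (hs : 0 ≤ s) (hst : s ≤ t) :
    lam0 * δ / 4 * ‖toE k‖ * (t - s) / jap t ^ δ ≤
      (lam lam0 δ s - lam lam0 δ t) * japKV k (t • toE k) := by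
  have hts : 0 ≤ t - s := sub_nonneg.2 hst
  have hgap := lam_sub_lam_ge hl hδ0 hs hst
  have hgap0 : 0 ≤ lam0 * δ * (t - s) * (1 + t) ^ (-(1 + δ)) :=
    mul_nonneg (mul_nonneg (by positivity) hts) (rpow_nonneg (by linarith) _)
  calc lam0 * δ / 4 * ‖toE k‖ * (t - s) / jap t ^ δ
      = lam0 * δ * (t - s) * ‖toE k‖ * (1 / (4 * jap t ^ δ)) := by ring
    _ ≤ lam0 * δ * (t - s) * ‖toE k‖ * ((1 + t) ^ (-(1 + δ)) * jap t) := by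
        gcongr
        exact one_div_four_mul_jap_rpow_le hδ0 hδ1 (hs.trans hst)
    _ = lam0 * δ * (t - s) * (1 + t) ^ (-(1 + δ)) * (‖toE k‖ * jap t) := by ring
    _ ≤ (lam lam0 δ s - lam lam0 δ t) * japKV k (t • toE k) :=
        mul_le_mul hgap (norm_mul_jap_le_japKV k t)
          (mul_nonneg (norm_nonneg _) (zero_le_one.trans (one_le_jap t))) (hgap0.trans hgap)

theorem Ckl_bound_general (d : ℕ) (σ lam0 δ : ℝ) (hσ : 0 ≤ σ)
    (hl : 0 < lam0) (hδ0 : 0 < δ) (hδ1 : δ < 1) :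
    ∃ θ₂ > (0:ℝ), ∃ C₀ > (0:ℝ), ∀ (k ℓ : Fin d → ℤ) (s t : ℝ), 0 ≤ s → s ≤ t →
      Ckl d σ lam0 δ k ℓ t s ≤
        C₀ * (t - s) * Real.exp (-2 * θ₂ * ‖toE k‖ * (t - s) / jap t ^ δ) *
          min (japV (t • toE k - s • toE ℓ)) (japV (s • toE ℓ)) ^ (-σ) := by
  refine ⟨lam0 * δ / 8, by positivity, 2 ^ σ, by positivity, fun k ℓ s t hs hst => ?_⟩
  have hdecay := lam_sub_lam_mul_japKV_ge hl.le hδ0.le hδ1.le k hs hst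
  have hsplit := wA_le_mul_wA_mul_wA (d := d) hσ
    (show 0 ≤ lam lam0 δ s by unfold lam; positivity) k ℓ (t • toE k) (s • toE ℓ)
  rw [Ckl, div_le_iff₀ (mul_pos (wA_pos ..) (wA_pos ..)),
    wA_eq_exp_mul_wA d σ _ (lam lam0 δ s)]
  calc (t - s) * (exp (-((lam lam0 δ s - lam lam0 δ t) * japKV k (t • toE k))) *
        wA d σ (lam lam0 δ s) k (t • toE k))
      ≤ (t - s) * (exp (-(lam0 * δ / 4 * ‖toE k‖ * (t - s) / jap t ^ δ)) *
        (2 ^ σ * min (japV (t • toE k - s • toE ℓ)) (japV (s • toE ℓ)) ^ (-σ) *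
          (wA d σ (lam lam0 δ s) ℓ (s • toE ℓ) *
            wA d σ (lam lam0 δ s) (k - ℓ) (t • toE k - s • toE ℓ)))) := by
        gcongr
        exact (wA_pos ..).le
    _ = _ := by ring_nf

/-- there are `θ₂, C₀ > 0` depending only on `λ₀, δ, σ` such that
`C_{k,ℓ}(t,s) ≤ C₀ (t-s) e^{-2θ₂|k|(t-s)/⟨t⟩^δ} min{⟨kt-ℓs⟩,⟨ℓs⟩}^{-σ}`. -/
theorem Ckl_bound (d : ℕ) (hd : 1 ≤ d) (σ lam0 δ : ℝ) (hσ : 0 ≤ σ)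
    (hl : 0 < lam0) (hδ0 : 0 < δ) (hδ1 : δ < 1) :
    ∃ θ₂ > (0:ℝ), ∃ C₀ > (0:ℝ), ∀ (k ℓ : Fin d → ℤ) (s t : ℝ), 0 ≤ s → s ≤ t →
      Ckl d σ lam0 δ k ℓ t s ≤
        C₀ * (t - s) * Real.exp (-2 * θ₂ * ‖toE k‖ * (t - s) / jap t ^ δ) *
          min (japV (t • toE k - s • toE ℓ)) (japV (s • toE ℓ)) ^ (-σ) :=
  Ckl_bound_general d σ lam0 δ hσ hl hδ0 hδ1
end
end

section
/- Let d ≥ 1 and let k, ℓ ∈ ℤ^d with k ≠ ℓ. Let t ≥ 0 and let s be a real number with t/2 ≤ s ≤ t and |kt − ℓs| ≤ t/4 (Euclidean norm in ℝ^d). Then |k|(t−s) ≥ t/4. -/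
open MeasureTheory
open scoped ENNReal

noncomputable section

/-! Since `k - ℓ` is a nonzero lattice vector, `s ≤ s |k - ℓ|`. Writing
`s (k - ℓ) = (kt - ℓs) - (t - s) k` then gives `t/2 ≤ s ≤ t/4 + (t - s) |k|`. -/

lemma toE_sub_apply {d : ℕ} (k ℓ : Fin d → ℤ) (i : Fin d) :
    (toE k - toE ℓ) i = ((k i - ℓ i : ℤ) : ℝ) := by
  simp [toE]

lemma one_le_norm_toE_sub_toE {d : ℕ} {k ℓ : Fin d → ℤ} (hkl : k ≠ ℓ) :
    1 ≤ ‖toE k - toE ℓ‖ := by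
  obtain ⟨i, hi⟩ := Function.ne_iff.mp hkl
  calc (1 : ℝ) ≤ |((k i - ℓ i : ℤ) : ℝ)| := by
        exact_mod_cast Int.one_le_abs (sub_ne_zero.mpr hi)
    _ = ‖(toE k - toE ℓ) i‖ := by rw [toE_sub_apply, Real.norm_eq_abs]
    _ ≤ ‖toE k - toE ℓ‖ := PiLp.norm_apply_le _ i

lemma abs_mul_norm_sub_le {E : Type*} [SeminormedAddCommGroup E] [NormedSpace ℝ E]
    (a b : E) (t s : ℝ) :
    |s| * ‖a - b‖ ≤ ‖t • a - s • b‖ + |t - s| * ‖a‖ := by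
  have hsplit : s • (a - b) = (t • a - s • b) - (t - s) • a := by
    rw [sub_smul, smul_sub]; abel
  calc |s| * ‖a - b‖ = ‖s • (a - b)‖ := (norm_smul s _).symm
    _ = ‖(t • a - s • b) - (t - s) • a‖ := by rw [hsplit]
    _ ≤ ‖t • a - s • b‖ + ‖(t - s) • a‖ := norm_sub_le _ _
    _ = ‖t • a - s • b‖ + |t - s| * ‖a‖ := by rw [norm_smul, Real.norm_eq_abs]

theorem echo_resonance_bound_general (d : ℕ) (k ℓ : Fin d → ℤ) (hkl : k ≠ ℓ)
    (t : ℝ) (s : ℝ) (hs1 : t / 2 ≤ s) (hs2 : s ≤ t)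
    (hres : ‖t • toE k - s • toE ℓ‖ ≤ t / 4) :
    ‖toE k‖ * (t - s) ≥ t / 4 := by
  have hs : 0 ≤ s := by linarith
  have hsplit := abs_mul_norm_sub_le (toE k) (toE ℓ) t s
  rw [abs_of_nonneg hs, abs_of_nonneg (sub_nonneg.mpr hs2)] at hsplit
  have hlattice : s ≤ s * ‖toE k - toE ℓ‖ :=
    le_mul_of_one_le_right hs (one_le_norm_toE_sub_toE hkl)
  linarith

/-- if `k ≠ ℓ`, `t/2 ≤ s ≤ t` and `|kt - ℓs| ≤ t/4`, then
`|k|(t-s) ≥ t/4`. -/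
theorem echo_resonance_bound (d : ℕ) (hd : 1 ≤ d) (k ℓ : Fin d → ℤ) (hkl : k ≠ ℓ)
    (t : ℝ) (ht : 0 ≤ t) (s : ℝ) (hs1 : t / 2 ≤ s) (hs2 : s ≤ t)
    (hres : ‖t • toE k - s • toE ℓ‖ ≤ t / 4) :
    ‖toE k‖ * (t - s) ≥ t / 4 :=
  echo_resonance_bound_general d k ℓ hkl t s hs1 hs2 hres
end
end

section
/- Let d ≥ 1, σ ≥ 0, λ₀ > 0 and δ ∈ (0,1), and set λ(t) = λ₀(1+(1+t)^{−δ}). There exist constants θ₁ > 0 and C > 0, depending only on d, σ, λ₀ and δ, such that the following holds. Let h : ℤ^d × ℝ^d → ℂ be such that h(k,·) is Schwartz for every k, and set ε₀ = Σ_{|α|≤d} Σ_{k∈ℤ^d} ∫_{ℝ^d} A_{k,η}(2λ₀) |∂^α_η h(k,η)| dη, assumed finite. Then for all t ≥ 0: Σ_{k∈ℤ^d∖{0}} |k|^{−1} A_{k,kt}(λ(t)) |h(k,kt)| ≤ C ε₀ e^{−θ₁⟨t⟩}. -/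
/-!
For `k ≠ 0` one has `⟨t⟩ ≤ ⟨k,kt⟩`, and `λ(t) ≤ 2λ₀ - θ₁` with `θ₁ = λ₀(1 - 2^{-δ})` once
`t ≥ 1`; hence `A_{k,kt}(λ(t)) ≤ e^{2θ₁} e^{-θ₁⟨t⟩} A_{k,kt}(2λ₀)`. The remaining factor
`A_{k,kt}(2λ₀) |h(k,kt)|` is bounded by the `α = (1,…,1)` term of `ε₀` through a weighted Sobolev
inequality `W(η)|f(η)| ≤ ∫ W |∂_1⋯∂_d f|`, valid for every weight `W` that is nondecreasing in
`|η|`: apply the fundamental theorem of calculus in one coordinate at a time, always integrating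
from `η_i` away from `0`, so that the weight only grows along the path.
-/

open MeasureTheory
open scoped ENNReal

noncomputable section

/-- Partial derivative in the `i`-th coordinate direction. -/
def coordDeriv {d : ℕ} (i : Fin d) (h : Ed d → ℂ) : Ed d → ℂ :=
  fun η => fderiv ℝ h η (EuclideanSpace.single i 1)

/-- Multi-index derivative `∂^α`. -/
def multiDeriv {d : ℕ} (α : Fin d → ℕ) (h : Ed d → ℂ) : Ed d → ℂ :=
  ((List.finRange d).flatMap fun i => List.replicate (α i) i).foldr coordDeriv h

/-- Multi-indices `α` of total order `|α| ≤ d`. -/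
def MIdx (d : ℕ) := {α : Fin d → ℕ // ∑ i, α i ≤ d}

open Filter Set Topology LineDeriv
open scoped SchwartzMap

section OneDimensional

variable {F : Type*} [NormedAddCommGroup F] [NormedSpace ℝ F] [CompleteSpace F]

theorem enorm_le_setLIntegral_Ioi_of_hasDerivAt {φ φ' : ℝ → F} {a : ℝ}
    (hderiv : ∀ t, HasDerivAt φ (φ' t) t) (hφ' : IntegrableOn φ' (Ioi a))
    (hφ : Tendsto φ atTop (𝓝 0)) :
    ‖φ a‖ₑ ≤ ∫⁻ t in Ioi a, ‖φ' t‖ₑ := by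
  have hftc := integral_Ioi_of_hasDerivAt_of_tendsto' (fun t _ => hderiv t) hφ' hφ
  rw [zero_sub] at hftc
  rw [← enorm_neg, ← hftc]
  exact enorm_integral_le_lintegral_enorm _

theorem enorm_le_setLIntegral_Iic_of_hasDerivAt {φ φ' : ℝ → F} {a : ℝ}
    (hderiv : ∀ t, HasDerivAt φ (φ' t) t) (hφ' : IntegrableOn φ' (Iic a))
    (hφ : Tendsto φ atBot (𝓝 0)) :
    ‖φ a‖ₑ ≤ ∫⁻ t in Iic a, ‖φ' t‖ₑ := by
  have hftc := integral_Iic_of_hasDerivAt_of_tendsto' (fun t _ => hderiv t) hφ' hφ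
  rw [sub_zero] at hftc
  rw [← hftc]
  exact enorm_integral_le_lintegral_enorm _

theorem mul_enorm_le_lintegral_of_hasDerivAt {φ φ' : ℝ → F} {ω : ℝ → ℝ≥0∞}
    (hω : ∀ a t, |a| ≤ |t| → ω a ≤ ω t) (hderiv : ∀ t, HasDerivAt φ (φ' t) t)
    (hφ' : Integrable φ') (hφ : Tendsto φ (cocompact ℝ) (𝓝 0)) (a : ℝ) :
    ω a * ‖φ a‖ₑ ≤ ∫⁻ t, ω t * ‖φ' t‖ₑ := by
  suffices key : ∀ S : Set ℝ, MeasurableSet S → (∀ t ∈ S, |a| ≤ |t|) →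
      ‖φ a‖ₑ ≤ ∫⁻ t in S, ‖φ' t‖ₑ → ω a * ‖φ a‖ₑ ≤ ∫⁻ t, ω t * ‖φ' t‖ₑ by
    rcases le_or_gt 0 a with ha | ha
    · refine key (Ioi a) measurableSet_Ioi (fun t ht => ?_) <|
        enorm_le_setLIntegral_Ioi_of_hasDerivAt hderiv hφ'.integrableOn
          (hφ.mono_left atTop_le_cocompact)
      rw [abs_of_nonneg ha, abs_of_pos (ha.trans_lt ht)]
      exact ht.le
    · refine key (Iic a) measurableSet_Iic (fun t ht => ?_) <|
        enorm_le_setLIntegral_Iic_of_hasDerivAt hderiv hφ'.integrableOn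
          (hφ.mono_left atBot_le_cocompact)
      rw [abs_of_neg ha, abs_of_neg (lt_of_le_of_lt ht ha)]
      exact neg_le_neg ht
  intro S hS hmono hbound
  calc ω a * ‖φ a‖ₑ ≤ ω a * ∫⁻ t in S, ‖φ' t‖ₑ := by gcongr
    _ ≤ ∫⁻ t in S, ω a * ‖φ' t‖ₑ := lintegral_const_mul_le _ _
    _ ≤ ∫⁻ t in S, ω t * ‖φ' t‖ₑ :=
        lintegral_mono_ae <| (ae_restrict_iff' hS).2 <| .of_forall fun t ht => by
          gcongr; exact hω a t (hmono t ht)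
    _ ≤ ∫⁻ t, ω t * ‖φ' t‖ₑ := setLIntegral_le_lintegral _ _

end OneDimensional

section Lines

variable {E : Type*} [NormedAddCommGroup E] [NormedSpace ℝ E]

theorem antilipschitzWith_const_add_smul {x v : E} (hv : v ≠ 0) :
    AntilipschitzWith ‖v‖₊⁻¹ fun t : ℝ => x + t • v := by
  refine AntilipschitzWith.of_le_mul_dist fun t u => ?_
  rw [dist_add_left, dist_eq_norm, dist_eq_norm, ← sub_smul, norm_smul, NNReal.coe_inv,
    coe_nnnorm, mul_comm ‖t - u‖, inv_mul_cancel_left₀ (norm_ne_zero_iff.2 hv)]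

theorem hasTemperateGrowth_const_add_smul (x v : E) :
    Function.HasTemperateGrowth fun t : ℝ => x + t • v :=
  (Function.HasTemperateGrowth.const x).add
    ((ContinuousLinearMap.id ℝ ℝ).smulRight v).hasTemperateGrowth

end Lines

namespace SchwartzMap

variable {E F : Type*} [NormedAddCommGroup E] [NormedSpace ℝ E]
  [NormedAddCommGroup F] [NormedSpace ℝ F]

def restrictLine (x : E) {v : E} (hv : v ≠ 0) : 𝓢(E, F) →L[ℝ] 𝓢(ℝ, F) :=
  compCLMOfAntilipschitz ℝ (hasTemperateGrowth_const_add_smul x v)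
    (antilipschitzWith_const_add_smul hv)

theorem hasDerivAt_apply_add_smul (f : 𝓢(E, F)) (x v : E) (t : ℝ) :
    HasDerivAt (fun t : ℝ => f (x + t • v)) (∂_{v} f (x + t • v)) t := by
  have hline : HasDerivAt (fun t : ℝ => x + t • v) v t := by
    simpa using ((hasDerivAt_id t).smul_const v).const_add x
  exact (f.hasFDerivAt _).comp_hasDerivAt t hline

end SchwartzMap

section Coordinates

open Function

variable {d : ℕ} {F : Type*} [NormedAddCommGroup F] [NormedSpace ℝ F]

def coordDerivs (l : List (Fin d)) (f : 𝓢(Ed d, F)) : 𝓢(Ed d, F) :=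
  l.foldr (fun i g => ∂_{EuclideanSpace.single i (1 : ℝ)} g) f

theorem coe_coordDerivs (l : List (Fin d)) (f : 𝓢(Ed d, ℂ)) :
    ⇑(coordDerivs l f) = l.foldr coordDeriv ⇑f := by
  induction l with
  | nil => rfl
  | cons i l ih => rw [List.foldr_cons, ← ih]; rfl

theorem multiDeriv_one_eq_coordDerivs (f : 𝓢(Ed d, ℂ)) :
    multiDeriv (fun _ => 1) ⇑f = ⇑(coordDerivs (List.finRange d) f) := by
  simp [multiDeriv, coe_coordDerivs]

theorem toLp_update_eq_add (y : Fin d → ℝ) (i : Fin d) (t : ℝ) :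
    WithLp.toLp 2 (update y i t) =
      WithLp.toLp 2 (update y i 0) + t • EuclideanSpace.single i (1 : ℝ) := by
  ext j
  rcases eq_or_ne j i with rfl | hj <;> simp [*]

theorem norm_toLp_update_le (y : Fin d → ℝ) (i : Fin d) {a t : ℝ} (h : |a| ≤ |t|) :
    ‖WithLp.toLp 2 (update y i a)‖ ≤ ‖WithLp.toLp 2 (update y i t)‖ := by
  simp only [EuclideanSpace.norm_eq]
  gcongr with j
  rcases eq_or_ne j i with rfl | hj
  · simpa using h
  · simp [hj]

variable {W : Ed d → ℝ≥0∞}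

theorem measurable_mul_enorm (hWm : Measurable W) (g : 𝓢(Ed d, F)) :
    Measurable fun η => W η * ‖g η‖ₑ :=
  hWm.mul g.continuous.enorm.measurable

variable [CompleteSpace F]

theorem mul_enorm_le_lintegral_lineDerivOp_single
    (hW : ∀ x y : Ed d, ‖x‖ ≤ ‖y‖ → W x ≤ W y) (f : 𝓢(Ed d, F)) (y : Fin d → ℝ) (i : Fin d) :
    W (WithLp.toLp 2 y) * ‖f (WithLp.toLp 2 y)‖ₑ ≤
      ∫⁻ t, W (WithLp.toLp 2 (update y i t)) *
        ‖∂_{EuclideanSpace.single i (1 : ℝ)} f (WithLp.toLp 2 (update y i t))‖ₑ := by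
  set z := WithLp.toLp 2 (update y i 0)
  set e := EuclideanSpace.single i (1 : ℝ)
  have he : e ≠ 0 := by simp [e]
  have hline : ∀ t, WithLp.toLp 2 (update y i t) = z + t • e := toLp_update_eq_add y i
  simp only [hline]
  conv_lhs => rw [← update_eq_self i y, hline]
  refine mul_enorm_le_lintegral_of_hasDerivAt (ω := fun t => W (z + t • e)) (fun a t h => ?_)
    (f.hasDerivAt_apply_add_smul z e) (SchwartzMap.restrictLine z he (∂_{e} f)).integrable
    (SchwartzMap.restrictLine z he f).tendsto_cocompact (y i)
  apply hW
  simpa only [hline] using norm_toLp_update_le y i h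

theorem mul_enorm_le_lmarginal_coordDerivs (hW : ∀ x y : Ed d, ‖x‖ ≤ ‖y‖ → W x ≤ W y)
    (hWm : Measurable W) {l : List (Fin d)} (hl : l.Nodup) (f : 𝓢(Ed d, F)) (y : Fin d → ℝ) :
    W (WithLp.toLp 2 y) * ‖f (WithLp.toLp 2 y)‖ₑ ≤
      (∫⋯∫⁻_l.toFinset, (fun y => W (WithLp.toLp 2 y) * ‖coordDerivs l f (WithLp.toLp 2 y)‖ₑ)
        ∂fun _ => volume) y := by
  induction l generalizing y with
  | nil => simp [coordDerivs]
  | cons i l ih =>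
    obtain ⟨hi, hl⟩ := List.nodup_cons.1 hl
    have hmeas : Measurable fun y : Fin d → ℝ =>
        W (WithLp.toLp 2 y) * ‖coordDerivs (i :: l) f (WithLp.toLp 2 y)‖ₑ :=
      (measurable_mul_enorm hWm _).comp (WithLp.measurable_toLp 2 _)
    rw [List.toFinset_cons, lmarginal_insert' _ hmeas (by simpa using hi)]
    exact (ih hl y).trans <| lmarginal_mono (fun y =>
      mul_enorm_le_lintegral_lineDerivOp_single hW (coordDerivs l f) y i) y

theorem mul_enorm_le_lintegral_coordDerivs (hW : ∀ x y : Ed d, ‖x‖ ≤ ‖y‖ → W x ≤ W y)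
    (hWm : Measurable W) (f : 𝓢(Ed d, F)) (x : Ed d) :
    W x * ‖f x‖ₑ ≤ ∫⁻ η, W η * ‖coordDerivs (List.finRange d) f η‖ₑ := by
  have h := mul_enorm_le_lmarginal_coordDerivs hW hWm (List.nodup_finRange d) f x.ofLp
  rwa [List.toFinset_finRange, lmarginal_univ, ← volume_pi,
    (PiLp.volume_preserving_toLp (Fin d)).lintegral_comp (measurable_mul_enorm hWm _)] at h

end Coordinates

section Weights

variable {d : ℕ}

theorem one_le_norm_toE {k : Fin d → ℤ} (hk : k ≠ 0) : 1 ≤ ‖toE k‖ := by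
  obtain ⟨i, hi⟩ := Function.ne_iff.1 hk
  calc (1 : ℝ) ≤ |(k i : ℝ)| := by exact_mod_cast Int.one_le_abs hi
    _ = ‖(toE k) i‖ := (Real.norm_eq_abs _).symm
    _ ≤ ‖toE k‖ := PiLp.norm_apply_le _ i

theorem jap_le_japKV_smul {k : Fin d → ℤ} (hk : k ≠ 0) (t : ℝ) :
    jap t ≤ japKV k (t • toE k) := by
  have hk1 := one_le_norm_toE hk
  have ht : t ^ 2 ≤ ‖t • toE k‖ ^ 2 := by
    rw [norm_smul, Real.norm_eq_abs, mul_pow, sq_abs]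
    exact le_mul_of_one_le_right (sq_nonneg t) (one_le_pow₀ hk1)
  unfold jap japKV
  gcongr
  linarith [sq_nonneg ‖toE k‖]

theorem wA_le_wA_of_norm_le {σ z : ℝ} (hσ : 0 ≤ σ) (hz : 0 ≤ z) (k : Fin d → ℤ)
    {η η' : Ed d} (h : ‖η‖ ≤ ‖η'‖) : wA d σ z k η ≤ wA d σ z k η' := by
  unfold wA japKV japV
  gcongr

theorem wA_le_exp_mul_wA (σ : ℝ) {z₁ z₂ c : ℝ} (k : Fin d → ℤ) (η : Ed d)
    (h : z₁ * japKV k η ≤ c + z₂ * japKV k η) :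
    wA d σ z₁ k η ≤ Real.exp c * wA d σ z₂ k η := by
  unfold wA
  rw [← mul_assoc, ← Real.exp_add]
  exact mul_le_mul_of_nonneg_right (Real.exp_le_exp.2 (by linarith)) (by unfold japV; positivity)

theorem continuous_wA (σ z : ℝ) (k : Fin d → ℤ) : Continuous (wA d σ z k) := by
  unfold wA japKV japV
  exact (by fun_prop : Continuous _).mul <|
    (by fun_prop : Continuous _).rpow_const fun η => .inl (Real.sqrt_pos.2 (by positivity)).ne'

end Weights

section Decay

variable {lam0 δ : ℝ}

/-- The rate `θ₁ = λ₀ (1 - 2^{-δ})`: once `t ≥ 1`, the radius `λ(t)` stays `θ₁` below `2λ₀`. -/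
def decayRate (lam0 δ : ℝ) : ℝ := lam0 * (1 - 2 ^ (-δ))

theorem decayRate_pos (hl : 0 < lam0) (hδ : 0 < δ) : 0 < decayRate lam0 δ :=
  mul_pos hl (sub_pos.2 (Real.rpow_lt_one_of_one_lt_of_neg one_lt_two (neg_neg_of_pos hδ)))

theorem lam_mul_le {t J : ℝ} (hl : 0 ≤ lam0) (hδ : 0 ≤ δ) (ht : 0 ≤ t) (hJ : jap t ≤ J) :
    lam lam0 δ t * J ≤ 2 * decayRate lam0 δ - decayRate lam0 δ * jap t + 2 * lam0 * J := by
  have hJ0 : 0 ≤ J := (Real.sqrt_nonneg _).trans hJ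
  have hr : (1 + t) ^ (-δ) ≤ 1 := Real.rpow_le_one_of_one_le_of_nonpos (by linarith) (by linarith)
  have hθ : 0 ≤ decayRate lam0 δ := mul_nonneg hl (sub_nonneg.2 <|
    Real.rpow_le_one_of_one_le_of_nonpos one_le_two (by linarith))
  unfold lam
  rcases le_total t 1 with ht1 | ht1
  · have hjap : jap t ≤ 2 := Real.sqrt_le_iff.2 ⟨zero_le_two, by nlinarith⟩
    have hlam : lam0 * (1 + (1 + t) ^ (-δ)) * J ≤ 2 * lam0 * J :=
      mul_le_mul_of_nonneg_right (by nlinarith) hJ0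
    nlinarith
  · have hr2 : (1 + t) ^ (-δ) ≤ 2 ^ (-δ) :=
      Real.rpow_le_rpow_of_nonpos two_pos (by linarith) (by linarith)
    have hlam : lam0 * (1 + (1 + t) ^ (-δ)) ≤ 2 * lam0 - decayRate lam0 δ := by
      unfold decayRate; nlinarith
    nlinarith [mul_le_mul_of_nonneg_right hlam hJ0, mul_le_mul_of_nonneg_left hJ hθ]

theorem wA_lam_le {d : ℕ} (σ : ℝ) (hl : 0 ≤ lam0) (hδ : 0 ≤ δ) {k : Fin d → ℤ} (hk : k ≠ 0)
    {t : ℝ} (ht : 0 ≤ t) :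
    wA d σ (lam lam0 δ t) k (t • toE k) ≤
      Real.exp (2 * decayRate lam0 δ) * Real.exp (-decayRate lam0 δ * jap t) *
        wA d σ (2 * lam0) k (t • toE k) := by
  rw [← Real.exp_add]
  refine wA_le_exp_mul_wA σ k _ ?_
  linarith [lam_mul_le (J := japKV k (t • toE k)) hl hδ ht (jap_le_japKV_smul hk t)]

end Decay

theorem ofReal_wA_mul_norm_le_lintegral_multiDeriv {d : ℕ} {σ z : ℝ} (hσ : 0 ≤ σ) (hz : 0 ≤ z)
    (k : Fin d → ℤ) (s : 𝓢(Ed d, ℂ)) (x : Ed d) :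
    ENNReal.ofReal (wA d σ z k x * ‖s x‖) ≤
      ∫⁻ η, ENNReal.ofReal (wA d σ z k η * ‖multiDeriv (fun _ => 1) (⇑s) η‖) := by
  have hW : ∀ x y : Ed d, ‖x‖ ≤ ‖y‖ →
      ENNReal.ofReal (wA d σ z k x) ≤ ENNReal.ofReal (wA d σ z k y) :=
    fun x y h => ENNReal.ofReal_le_ofReal (wA_le_wA_of_norm_le hσ hz k h)
  have hpos : ∀ η, 0 ≤ wA d σ z k η := fun η => by unfold wA japV; positivity
  simp only [ENNReal.ofReal_mul (hpos _), ofReal_norm, multiDeriv_one_eq_coordDerivs]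
  exact mul_enorm_le_lintegral_coordDerivs hW (continuous_wA σ z k).measurable.ennreal_ofReal s x

theorem ofReal_free_field_term_le {d : ℕ} {σ lam0 δ : ℝ} (hσ : 0 ≤ σ) (hl : 0 ≤ lam0)
    (hδ : 0 ≤ δ) {k : Fin d → ℤ} (hk : k ≠ 0) {t : ℝ} (ht : 0 ≤ t) (s : 𝓢(Ed d, ℂ)) :
    ENNReal.ofReal (‖toE k‖⁻¹ * wA d σ (lam lam0 δ t) k (t • toE k) * ‖s (t • toE k)‖) ≤
      ENNReal.ofReal (Real.exp (2 * decayRate lam0 δ) * Real.exp (-decayRate lam0 δ * jap t)) *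
        ∫⁻ η, ENNReal.ofReal (wA d σ (2 * lam0) k η * ‖multiDeriv (fun _ => 1) (⇑s) η‖) := by
  set x := t • toE k
  have hk1 : ‖toE k‖⁻¹ ≤ 1 := inv_le_one_of_one_le₀ (one_le_norm_toE hk)
  have hw : ‖toE k‖⁻¹ * wA d σ (lam lam0 δ t) k x * ‖s x‖ ≤
      Real.exp (2 * decayRate lam0 δ) * Real.exp (-decayRate lam0 δ * jap t) *
        (wA d σ (2 * lam0) k x * ‖s x‖) := by
    have hpos : 0 ≤ wA d σ (lam lam0 δ t) k x := by unfold wA japV; positivity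
    calc ‖toE k‖⁻¹ * wA d σ (lam lam0 δ t) k x * ‖s x‖ ≤ wA d σ (lam lam0 δ t) k x * ‖s x‖ := by
          gcongr; exact mul_le_of_le_one_left hpos hk1
      _ ≤ _ := by
          rw [← mul_assoc]
          exact mul_le_mul_of_nonneg_right (wA_lam_le σ hl hδ hk ht) (norm_nonneg _)
  refine (ENNReal.ofReal_le_ofReal hw).trans ?_
  rw [ENNReal.ofReal_mul (by positivity)]
  gcongr
  exact ofReal_wA_mul_norm_le_lintegral_multiDeriv hσ (by positivity) k s x

theorem free_field_decay_general (d : ℕ) (σ lam0 δ : ℝ)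
    (hσ : 0 ≤ σ) (hl : 0 < lam0) (hδ0 : 0 < δ) :
    ∃ θ₁ > (0:ℝ), ∃ C > (0:ℝ),
      ∀ h : (Fin d → ℤ) → SchwartzMap (Ed d) ℂ,
      (∑' (α : MIdx d) (k : Fin d → ℤ),
          ∫⁻ η, ENNReal.ofReal (wA d σ (2 * lam0) k η * ‖multiDeriv α.1 (⇑(h k)) η‖)) ≠ ⊤ →
      ∀ t : ℝ, 0 ≤ t →
        (∑' k : {k : Fin d → ℤ // k ≠ 0},
            ENNReal.ofReal (‖toE k.1‖⁻¹ * wA d σ (lam lam0 δ t) k.1 (t • toE k.1) *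
              ‖h k.1 (t • toE k.1)‖)) ≤
          ENNReal.ofReal (C * Real.exp (-θ₁ * jap t)) *
            ∑' (α : MIdx d) (k : Fin d → ℤ),
              ∫⁻ η, ENNReal.ofReal (wA d σ (2 * lam0) k η * ‖multiDeriv α.1 (⇑(h k)) η‖) := by
  refine ⟨decayRate lam0 δ, decayRate_pos hl hδ0, Real.exp (2 * decayRate lam0 δ),
    Real.exp_pos _, fun h _ t ht => ?_⟩
  set S : (Fin d → ℤ) → ℝ≥0∞ := fun k =>
    ∫⁻ η, ENNReal.ofReal (wA d σ (2 * lam0) k η * ‖multiDeriv (fun _ => 1) (⇑(h k)) η‖)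
  have hone : ∑ _ : Fin d, 1 ≤ d := by simp
  calc _ ≤ ∑' k : {k : Fin d → ℤ // k ≠ 0}, ENNReal.ofReal (Real.exp (2 * decayRate lam0 δ) *
          Real.exp (-decayRate lam0 δ * jap t)) * S k :=
        ENNReal.tsum_le_tsum fun k =>
          ofReal_free_field_term_le hσ hl.le hδ0.le k.2 ht (h k)
    _ ≤ _ := by
        rw [ENNReal.tsum_mul_left]
        gcongr
        exact (ENNReal.tsum_comp_le_tsum_of_injective Subtype.val_injective S).trans
          (ENNReal.le_tsum (⟨fun _ => 1, hone⟩ : MIdx d))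

/-- decay of the free electric field: with
`ε₀ = Σ_{|α|≤d} Σ_k ∫ A_{k,η}(2λ₀)|∂^α_η h(k,η)| dη` finite, one has
`Σ_{k≠0} |k|^{-1} A_{k,kt}(λ(t)) |h(k,kt)| ≤ C ε₀ e^{-θ₁⟨t⟩}` for all `t ≥ 0`. -/
theorem free_field_decay (d : ℕ) (hd : 1 ≤ d) (σ lam0 δ : ℝ)
    (hσ : 0 ≤ σ) (hl : 0 < lam0) (hδ0 : 0 < δ) (hδ1 : δ < 1) :
    ∃ θ₁ > (0:ℝ), ∃ C > (0:ℝ),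
      ∀ h : (Fin d → ℤ) → SchwartzMap (Ed d) ℂ,
      (∑' (α : MIdx d) (k : Fin d → ℤ),
          ∫⁻ η, ENNReal.ofReal (wA d σ (2 * lam0) k η * ‖multiDeriv α.1 (⇑(h k)) η‖)) ≠ ⊤ →
      ∀ t : ℝ, 0 ≤ t →
        (∑' k : {k : Fin d → ℤ // k ≠ 0},
            ENNReal.ofReal (‖toE k.1‖⁻¹ * wA d σ (lam lam0 δ t) k.1 (t • toE k.1) *
              ‖h k.1 (t • toE k.1)‖)) ≤
          ENNReal.ofReal (C * Real.exp (-θ₁ * jap t)) *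
            ∑' (α : MIdx d) (k : Fin d → ℤ),
              ∫⁻ η, ENNReal.ofReal (wA d σ (2 * lam0) k η * ‖multiDeriv α.1 (⇑(h k)) η‖) :=
  free_field_decay_general d σ lam0 δ hσ hl hδ0
end
end
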